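/- For every natural number j ≥ 1, the series ∑_{r=1}^∞ arctan( L_j²·F_j·L_{4jr} / (F_{4jr}² − F_{2j}² + L_j²) ) converges and its sum equals arctan( 1 / F_j ). -/

import Mathlib

def lucas : ℕ → ℕ
  | 0 => 2
  | 1 => 1
  | n + 2 => lucas (n + 1) + lucas n

/-!
By the subtraction formula for `arctan`, the `r`-th term equals
`arctan (L_j / F_m) - arctan (L_j / F_{m + 4j})` with `m = 2j(2r + 1)`, because for even `m`
Binet's formulas give `F_m F_{m+4j} = F_{m+2j}² - F_{2j}²` and `F_{m+4j} - F_m = F_{2j} L_{m+2j}`,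
and `F_{2j} = F_j L_j`. The series therefore telescopes to `arctan (L_j / F_{2j}) = arctan (1 / F_j)`.
-/

open Filter Topology Real goldenRatio

lemma arctan_div_sub_arctan_div (a : ℝ) {x y : ℝ} (hxy : 0 < x * y) :
    arctan (a / x) - arctan (a / y) = arctan (a * (y - x) / (x * y + a ^ 2)) := by
  have hx : x ≠ 0 := by rintro rfl; simp at hxy
  have hy : y ≠ 0 := by rintro rfl; simp at hxy
  have hprod : a / x * -(a / y) < 1 := by
    have : 0 ≤ a ^ 2 / (x * y) := by positivity
    rw [mul_neg, div_mul_div_comm, ← sq]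
    linarith
  rw [sub_eq_add_neg, ← arctan_neg, arctan_add hprod]
  congr 1
  have hden : 1 - a / x * -(a / y) = (x * y + a ^ 2) / (x * y) := by field_simp; ring
  rw [hden]
  field_simp
  ring

theorem Antitone.hasSum_sub_succ {g : ℕ → ℝ} (hg : Antitone g) {l : ℝ}
    (hl : Tendsto g atTop (𝓝 l)) : HasSum (fun n ↦ g n - g (n + 1)) (g 0 - l) := by
  rw [hasSum_iff_tendsto_nat_of_nonneg (fun n ↦ sub_nonneg.2 (hg n.le_succ))]
  simpa only [Finset.sum_range_sub'] using hl.const_sub (g 0)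

theorem Nat.tendsto_fib_atTop : Tendsto Nat.fib atTop atTop :=
  tendsto_atTop_mono' atTop ((eventually_ge_atTop 5).mono fun _ ↦ Nat.le_fib_self) tendsto_id

lemma lucas_pos : ∀ n, 0 < lucas n
  | 0 => by decide
  | 1 => by decide
  | n + 2 => Nat.add_pos_left (lucas_pos (n + 1)) _

lemma coe_lucas_eq : ∀ n, (lucas n : ℝ) = φ ^ n + ψ ^ n
  | 0 => by norm_num [lucas]
  | 1 => by simp [lucas]
  | n + 2 => by
    push_cast [lucas, coe_lucas_eq (n + 1), coe_lucas_eq n]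
    rw [pow_add φ n 2, pow_add ψ n 2, goldenRatio_sq, goldenConj_sq]
    ring

lemma goldenRatio_pow_mul_goldenConj_pow (n : ℕ) : φ ^ n * ψ ^ n = (-1) ^ n := by
  rw [← mul_pow, goldenRatio_mul_goldenConj]

lemma coe_fib_two_mul (n : ℕ) : (Nat.fib (2 * n) : ℝ) = Nat.fib n * lucas n := by
  rw [coe_fib_eq, coe_fib_eq, coe_lucas_eq, pow_mul', pow_mul']
  generalize φ ^ n = x, ψ ^ n = y
  ring

lemma fib_mul_fib_add_two_mul (m n : ℕ) :
    (Nat.fib m : ℝ) * Nat.fib (m + 2 * n) = Nat.fib (m + n) ^ 2 - (-1) ^ m * Nat.fib n ^ 2 := by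
  have hm := goldenRatio_pow_mul_goldenConj_pow m
  have hn := goldenRatio_pow_mul_goldenConj_pow n
  simp only [coe_fib_eq, pow_add, pow_mul']
  generalize φ ^ m = x, ψ ^ m = y, φ ^ n = u, ψ ^ n = v at *
  field_simp
  linear_combination (2 * (-1) ^ n - u ^ 2 - v ^ 2) * hm + (2 * x * y - 2 * (-1) ^ m) * hn

lemma fib_add_two_mul_sub (m n : ℕ) :
    (Nat.fib (m + 2 * n) : ℝ) - (-1) ^ n * Nat.fib m = Nat.fib n * lucas (m + n) := by
  have hn := goldenRatio_pow_mul_goldenConj_pow n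
  simp only [coe_fib_eq, coe_lucas_eq, pow_add, pow_mul']
  generalize φ ^ m = x, ψ ^ m = y, φ ^ n = u, ψ ^ n = v at *
  field_simp
  linear_combination (x - y) * hn

lemma arctan_lucas_div_fib_sub_arctan_lucas_div_fib (j : ℕ) {m : ℕ} (hm : Even m) (hm0 : 0 < m) :
    arctan (lucas j / Nat.fib m) - arctan (lucas j / Nat.fib (m + 4 * j)) =
      arctan ((lucas j : ℝ) ^ 2 * Nat.fib j * lucas (m + 2 * j) /
        ((Nat.fib (m + 2 * j) : ℝ) ^ 2 - (Nat.fib (2 * j) : ℝ) ^ 2 + (lucas j : ℝ) ^ 2)) := by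
  have hpos : 0 < (Nat.fib m : ℝ) * Nat.fib (m + 4 * j) := by
    have := Nat.fib_pos.2 hm0
    have := Nat.fib_pos.2 (hm0.trans_le (m.le_add_right (4 * j)))
    positivity
  have hprod := fib_mul_fib_add_two_mul m (2 * j)
  have hdiff := fib_add_two_mul_sub m (2 * j)
  rw [hm.neg_one_pow, one_mul, ← mul_assoc, show m + 2 * 2 * j = m + 4 * j by ring] at hprod
  rw [(even_two_mul j).neg_one_pow, one_mul, ← mul_assoc,
    show m + 2 * 2 * j = m + 4 * j by ring] at hdiff
  rw [arctan_div_sub_arctan_div _ hpos, hprod, hdiff, coe_fib_two_mul]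
  congr 1
  ring

theorem stmt6 (j : ℕ) (hj : 1 ≤ j) :
    HasSum (fun r : ℕ =>
        Real.arctan ((lucas j : ℝ) ^ 2 * (Nat.fib j : ℝ) * (lucas (4 * j * (1 + r)) : ℝ) /
          ((Nat.fib (4 * j * (1 + r)) : ℝ) ^ 2 - (Nat.fib (2 * j) : ℝ) ^ 2
            + (lucas j : ℝ) ^ 2)))
      (Real.arctan (1 / (Nat.fib j : ℝ))) := by
  set g : ℕ → ℝ := fun r ↦ arctan (lucas j / Nat.fib (2 * j * (2 * r + 1))) with hg
  have hterm : ∀ r : ℕ, g r - g (r + 1) =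
      arctan ((lucas j : ℝ) ^ 2 * Nat.fib j * lucas (4 * j * (1 + r)) /
        ((Nat.fib (4 * j * (1 + r)) : ℝ) ^ 2 - (Nat.fib (2 * j) : ℝ) ^ 2 + (lucas j : ℝ) ^ 2)) := by
    intro r
    have := arctan_lucas_div_fib_sub_arctan_lucas_div_fib j (m := 2 * j * (2 * r + 1))
      (by rw [mul_assoc]; exact even_two_mul _) (by positivity)
    rwa [show 2 * j * (2 * r + 1) + 2 * j = 4 * j * (1 + r) by ring,
      show 2 * j * (2 * r + 1) + 4 * j = 2 * j * (2 * (r + 1) + 1) by ring] at this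
  have hanti : Antitone g := antitone_nat_of_succ_le fun r ↦
    arctan_strictMono.monotone <| div_le_div_of_nonneg_left (Nat.cast_nonneg _)
      (Nat.cast_pos.2 <| Nat.fib_pos.2 <| by positivity)
      (Nat.cast_le.2 <| Nat.fib_mono <| Nat.mul_le_mul_left _ <| by omega)
  have hlim : Tendsto g atTop (𝓝 0) := by
    have hidx : Tendsto (fun r : ℕ ↦ 2 * j * (2 * r + 1)) atTop atTop :=
      tendsto_atTop_mono (fun r ↦ show r ≤ _ by nlinarith) tendsto_id
    have := tendsto_const_nhds (x := (lucas j : ℝ)).div_atTop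
      (tendsto_natCast_atTop_atTop.comp (Nat.tendsto_fib_atTop.comp hidx))
    rw [← arctan_zero]
    exact (continuous_arctan.tendsto 0).comp this
  have hg0 : g 0 = arctan (1 / Nat.fib j) := by
    rw [hg]
    dsimp only
    rw [mul_zero, zero_add, mul_one, coe_fib_two_mul, one_div,
      div_mul_cancel_right₀ (Nat.cast_ne_zero.2 (lucas_pos j).ne')]
  simpa only [hterm, hg0, sub_zero] using hanti.hasSum_sub_succ hlim
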